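/- arXiv:1006.2619 — 2 statements merged into one kernel-verified Lean document; each statement's English description precedes it below -/
import Mathlib

section
/- For every ψ in H¹(Ω) with Ω = ℝ×(-a,a) vanishing on Γ_θ^D (for either θ = 0 or θ = π), the inequality ∫_Ω |∇ψ|² ≥ E_1 ∫_Ω |ψ|² holds, where E_1 = (π/(4a))². -/
open Real MeasureTheory

/-- Partial derivative in the first variable. -/
noncomputable def pd1 (f : ℝ × ℝ → ℝ) (p : ℝ × ℝ) : ℝ := deriv (fun t => f (t, p.2)) p.1

/-- Partial derivative in the second variable. -/
noncomputable def pd2 (f : ℝ × ℝ → ℝ) (p : ℝ × ℝ) : ℝ := deriv (fun t => f (p.1, t)) p.2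

open Set Filter Topology intervalIntegral

/-!
On every vertical fibre `y ↦ ψ (x, y)` of the strip the boundary condition leaves a function
on an interval of length `2a` vanishing at one endpoint (in the twisted case for all `x ≠ 0`),
whose sharp one-dimensional Poincaré constant is `(π / (4a))²`, the first eigenvalue of the
mixed Dirichlet–Neumann problem. Integrating over `x` and dropping `(∂₁ψ)²` gives the theorem.

The one-dimensional inequality comes from the Riccati/Picone identity: if `c' = -k² - c²`
then `u'² - k² u² = (u' - c u)² + (c u²)'`. The solution `c y = k tan (k (y₀ - y))` is regular
on `[a, b]` as long as `k (b - a) < π / 2`, and it vanishes at `y₀`; taking `y₀` to be the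
endpoint where `u` is free kills both boundary terms.
-/

theorem hasDerivAt_mul_tan_mul_sub {k y₀ y : ℝ} (hy : cos (k * (y₀ - y)) ≠ 0) :
    HasDerivAt (fun y => k * tan (k * (y₀ - y))) (-k ^ 2 - (k * tan (k * (y₀ - y))) ^ 2) y := by
  have hlin : HasDerivAt (fun y => k * (y₀ - y)) (-k) y := by
    simpa using ((hasDerivAt_id y).const_sub y₀).const_mul k
  refine (((hasDerivAt_tan hy).comp y hlin).const_mul k).congr_deriv ?_
  rw [tan_eq_sin_div_cos]
  field_simp
  linear_combination k ^ 2 * sin_sq_add_cos_sq (k * (y₀ - y))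

theorem integral_deriv_sq_sub_eq_of_riccati {u c : ℝ → ℝ} {a b k : ℝ} (hab : a ≤ b)
    (hu : ContDiff ℝ 1 u) (hc : ∀ y ∈ Icc a b, HasDerivAt c (-k ^ 2 - c y ^ 2) y) :
    ∫ y in a..b, (deriv u y ^ 2 - k ^ 2 * u y ^ 2)
      = (∫ y in a..b, (deriv u y - c y * u y) ^ 2) + (c b * u b ^ 2 - c a * u a ^ 2) := by
  have hu' : Continuous (deriv u) := hu.continuous_deriv le_rfl
  have hcc : ContinuousOn c (Icc a b) := fun y hy => (hc y hy).continuousAt.continuousWithinAt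
  have hsq : IntervalIntegrable (fun y => (deriv u y - c y * u y) ^ 2) volume a b :=
    ((hu'.continuousOn.sub (hcc.mul hu.continuous.continuousOn)).pow 2).intervalIntegrable_of_Icc
      hab
  have hlag : IntervalIntegrable (fun y => deriv u y ^ 2 - k ^ 2 * u y ^ 2) volume a b :=
    ((hu'.pow 2).sub (continuous_const.mul (hu.continuous.pow 2))).intervalIntegrable a b
  have hftc : ∫ y in a..b, (deriv u y ^ 2 - k ^ 2 * u y ^ 2 - (deriv u y - c y * u y) ^ 2)
      = c b * u b ^ 2 - c a * u a ^ 2 := by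
    refine integral_eq_sub_of_hasDerivAt (f := fun y => c y * u y ^ 2) (fun y hy => ?_)
      (hlag.sub hsq)
    rw [uIcc_of_le hab] at hy
    refine ((hc y hy).mul ((hu.differentiable one_ne_zero y).hasDerivAt.fun_pow 2)).congr_deriv ?_
    push_cast
    ring
  rw [← hftc, ← integral_add hsq (hlag.sub hsq)]
  simp only [add_sub_cancel]

theorem sq_mul_integral_sq_le_integral_deriv_sq_of_riccati {u c : ℝ → ℝ} {a b k : ℝ}
    (hab : a ≤ b) (hu : ContDiff ℝ 1 u) (hc : ∀ y ∈ Icc a b, HasDerivAt c (-k ^ 2 - c y ^ 2) y)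
    (hbd : c a * u a ^ 2 ≤ c b * u b ^ 2) :
    k ^ 2 * ∫ y in a..b, u y ^ 2 ≤ ∫ y in a..b, deriv u y ^ 2 := by
  have hnonneg : 0 ≤ ∫ y in a..b, (deriv u y ^ 2 - k ^ 2 * u y ^ 2) := by
    rw [integral_deriv_sq_sub_eq_of_riccati hab hu hc]
    have : 0 ≤ ∫ y in a..b, (deriv u y - c y * u y) ^ 2 :=
      integral_nonneg hab fun y _ => sq_nonneg _
    linarith
  have hu'2 : IntervalIntegrable (fun y => deriv u y ^ 2) volume a b :=
    ((hu.continuous_deriv le_rfl).pow 2).intervalIntegrable _ _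
  have hu2 : IntervalIntegrable (fun y => k ^ 2 * u y ^ 2) volume a b :=
    (continuous_const.mul (hu.continuous.pow 2)).intervalIntegrable _ _
  rwa [integral_sub hu'2 hu2, intervalIntegral.integral_const_mul, sub_nonneg] at hnonneg

theorem sq_mul_integral_sq_le_integral_deriv_sq {u : ℝ → ℝ} {a b k : ℝ} (hab : a ≤ b)
    (hk : 0 ≤ k) (hkL : k * (b - a) < π / 2) (hu : ContDiff ℝ 1 u) (h0 : u a = 0 ∨ u b = 0) :
    k ^ 2 * ∫ y in a..b, u y ^ 2 ≤ ∫ y in a..b, deriv u y ^ 2 := by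
  have hc : ∀ y₀ ∈ Icc a b, ∀ y ∈ Icc a b, HasDerivAt (fun y => k * tan (k * (y₀ - y)))
      (-k ^ 2 - (k * tan (k * (y₀ - y))) ^ 2) y := by
    intro y₀ hy₀ y hy
    refine hasDerivAt_mul_tan_mul_sub (cos_pos_of_mem_Ioo ⟨?_, ?_⟩).ne'
    · nlinarith [hy.1, hy.2, hy₀.1, hy₀.2]
    · nlinarith [hy.1, hy.2, hy₀.1, hy₀.2]
  rcases h0 with h | h
  · exact sq_mul_integral_sq_le_integral_deriv_sq_of_riccati hab hu (hc b ⟨hab, le_rfl⟩)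
      (by simp [h])
  · exact sq_mul_integral_sq_le_integral_deriv_sq_of_riccati hab hu (hc a ⟨le_rfl, hab⟩)
      (by simp [h])

theorem sq_pi_div_mul_integral_sq_le_integral_deriv_sq {u : ℝ → ℝ} {a b : ℝ} (hab : a < b)
    (hu : ContDiff ℝ 1 u) (h0 : u a = 0 ∨ u b = 0) :
    (π / (2 * (b - a))) ^ 2 * ∫ y in a..b, u y ^ 2 ≤ ∫ y in a..b, deriv u y ^ 2 := by
  have hL : 0 < b - a := sub_pos.2 hab
  have hK : 0 < π / (2 * (b - a)) := by positivity
  -- at the sharp constant itself the multiplier `k tan (k (y₀ - y))` blows up at the far endpoint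
  have hlim : Tendsto (fun k => k ^ 2 * ∫ y in a..b, u y ^ 2) (𝓝[<] (π / (2 * (b - a))))
      (𝓝 ((π / (2 * (b - a))) ^ 2 * ∫ y in a..b, u y ^ 2)) :=
    (((continuous_pow 2).mul continuous_const).tendsto _).mono_left nhdsWithin_le_nhds
  refine le_of_tendsto hlim ?_
  filter_upwards [Ioo_mem_nhdsLT hK] with k hk
  refine sq_mul_integral_sq_le_integral_deriv_sq hab.le hk.1.le ?_ hu h0
  calc k * (b - a) < π / (2 * (b - a)) * (b - a) := by gcongr; exact hk.2
    _ = π / 2 := by field_simp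

theorem setIntegral_prod_mono {α β : Type*} [MeasurableSpace α] [MeasurableSpace β]
    {μ : Measure α} {ν : Measure β} [SFinite μ] [SFinite ν] {s : Set α} {t : Set β}
    {f g : α × β → ℝ} (hf : IntegrableOn f (s ×ˢ t) (μ.prod ν))
    (hg : IntegrableOn g (s ×ˢ t) (μ.prod ν))
    (h : ∀ᵐ x ∂μ.restrict s, ∫ y in t, f (x, y) ∂ν ≤ ∫ y in t, g (x, y) ∂ν) :
    ∫ z in s ×ˢ t, f z ∂μ.prod ν ≤ ∫ z in s ×ˢ t, g z ∂μ.prod ν := by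
  rw [setIntegral_prod f hf, setIntegral_prod g hg]
  rw [IntegrableOn, ← Measure.prod_restrict] at hf hg
  exact integral_mono_ae hf.integral_prod_left hg.integral_prod_left h

/-- Poincaré inequality `∫_Ω |∇ψ|² ≥ E₁ ∫_Ω |ψ|²` in the strip `Ω = ℝ × (-a,a)` for
`H¹` functions vanishing on the Dirichlet part of the boundary, in either the
untwisted case (`θ = 0`, Dirichlet on `ℝ × {-a}`) or the twisted case (`θ = π`,
Dirichlet on `(-∞,0) × {-a} ∪ (0,∞) × {a}`). -/
theorem poincare_strip (a : ℝ) (ha : 0 < a) (ψ : ℝ × ℝ → ℝ)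
    (hψ : ContDiff ℝ 1 ψ)
    (hint : IntegrableOn (fun p => (ψ p) ^ 2) (Set.univ ×ˢ Set.Ioo (-a) a))
    (hint' : IntegrableOn (fun p => (pd1 ψ p) ^ 2 + (pd2 ψ p) ^ 2)
      (Set.univ ×ˢ Set.Ioo (-a) a))
    (hbc : (∀ x1 : ℝ, ψ (x1, -a) = 0) ∨
      ((∀ x1 : ℝ, x1 < 0 → ψ (x1, -a) = 0) ∧ (∀ x1 : ℝ, 0 < x1 → ψ (x1, a) = 0))) :
    (π / (4 * a)) ^ 2 * ∫ p in Set.univ ×ˢ Set.Ioo (-a) a, (ψ p) ^ 2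
      ≤ ∫ p in Set.univ ×ˢ Set.Ioo (-a) a, ((pd1 ψ p) ^ 2 + (pd2 ψ p) ^ 2) := by
  have hbc_ae : ∀ᵐ x : ℝ, ψ (x, -a) = 0 ∨ ψ (x, a) = 0 := by
    rcases hbc with h | ⟨hl, hr⟩
    · exact ae_of_all _ fun x => .inl (h x)
    · filter_upwards [Measure.ae_ne volume 0] with x hx
      exact hx.lt_or_gt.imp (hl x) (hr x)
  have hpd2 : IntegrableOn (fun p => pd2 ψ p ^ 2) (univ ×ˢ Ioo (-a) a) :=
    hint'.mono' ((measurable_deriv_with_param (f := fun x t => ψ (x, t))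
      hψ.continuous).pow_const 2).aestronglyMeasurable
      (ae_of_all _ fun p => by simp only [norm_pow, norm_eq_abs, sq_abs]; nlinarith)
  calc (π / (4 * a)) ^ 2 * ∫ p in univ ×ˢ Ioo (-a) a, ψ p ^ 2
      = ∫ p in univ ×ˢ Ioo (-a) a, (π / (4 * a)) ^ 2 * ψ p ^ 2 :=
        (MeasureTheory.integral_const_mul _ _).symm
    _ ≤ ∫ p in univ ×ˢ Ioo (-a) a, pd2 ψ p ^ 2 := by
      refine setIntegral_prod_mono (hint.const_mul _) hpd2 ?_
      rw [Measure.restrict_univ]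
      filter_upwards [hbc_ae] with x hx
      have := sq_pi_div_mul_integral_sq_le_integral_deriv_sq (u := fun y => ψ (x, y))
        (by linarith : -a < a) (hψ.comp (contDiff_const.prodMk contDiff_id)) hx
      rwa [show π / (2 * (a - -a)) = π / (4 * a) by ring, integral_of_le (by linarith),
        integral_of_le (by linarith), integral_Ioc_eq_integral_Ioo, integral_Ioc_eq_integral_Ioo,
        ← MeasureTheory.integral_const_mul] at this
    _ ≤ ∫ p in univ ×ˢ Ioo (-a) a, (pd1 ψ p ^ 2 + pd2 ψ p ^ 2) :=
      integral_mono_of_nonneg (ae_of_all _ fun _ => sq_nonneg _) hint'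
        (ae_of_all _ fun _ => le_add_of_nonneg_left (sq_nonneg _))
end

section
/- There exists a constant C such that for all t ≥ 1 the operator norm of the one-dimensional heat semigroup e^{tΔ} from the weighted space L²(ℝ, e^{x²/4}dx) to L²(ℝ) satisfies C^{-1} t^{-1/4} ≤ ‖e^{tΔ}‖ ≤ C t^{-1/4}. -/
open Real MeasureTheory

/-- The one-dimensional heat semigroup `e^{tΔ}` acting by convolution with the
Gaussian heat kernel. -/
noncomputable def heatSemigroup1d (t : ℝ) (φ : ℝ → ℝ) : ℝ → ℝ := fun x =>
  ∫ x' : ℝ, (4 * π * t) ^ (-(1 : ℝ) / 2) * Real.exp (-(x - x') ^ 2 / (4 * t)) * φ x'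

/-!
Upper bound: write the kernel integral as `∫ (K_t(x - s) e^{-s²/8}) (φ(s) e^{s²/8}) ds` and apply
Cauchy–Schwarz. For `t ≥ 1` the square of the first factor is at most
`(4πt)⁻¹ e^{-x²/(16t)} e^{-s²/8}`, so `(e^{tΔ}φ)(x)² ≤ (4πt)⁻¹ √(8π) e^{-x²/(16t)} ‖φ‖²_K`, and
integrating in `x` gives `‖e^{tΔ}φ‖² ≤ √8 t^{-1/2} ‖φ‖²_K`.

Lower bound: for `φ = 1_{[0,1]}` the kernel is at least `(4πt)^{-1/2} e^{-1/4}` on `[0, √t] × [0, 1]`,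
so `‖e^{tΔ}φ‖² ≥ e^{-1/2} / (4π √t)`, while `‖φ‖²_K ≤ e^{1/4}`.
-/

section CauchySchwarz

variable {α : Type*} [MeasurableSpace α] {μ : Measure α}

theorem integral_mul_eq_inner_toLp {f g : α → ℝ} (hf : MemLp f 2 μ) (hg : MemLp g 2 μ) :
    ∫ a, f a * g a ∂μ = inner ℝ (hf.toLp f) (hg.toLp g) := by
  rw [L2.inner_def]
  refine integral_congr_ae ?_
  filter_upwards [hf.coeFn_toLp, hg.coeFn_toLp] with a hfa hga
  simp [hfa, hga, mul_comm]

theorem sq_integral_mul_le {f g : α → ℝ} (hf : MemLp f 2 μ) (hg : MemLp g 2 μ) :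
    (∫ a, f a * g a ∂μ) ^ 2 ≤ (∫ a, f a ^ 2 ∂μ) * ∫ a, g a ^ 2 ∂μ := by
  simp only [sq, integral_mul_eq_inner_toLp hf hg, integral_mul_eq_inner_toLp hf hf,
    integral_mul_eq_inner_toLp hg hg]
  exact real_inner_mul_inner_self_le _ _

end CauchySchwarz

theorem neg_sq_div_eq_neg_inv_mul_sq (a x : ℝ) : -x ^ 2 / a = -a⁻¹ * x ^ 2 := by ring

theorem integrable_exp_neg_sq_div {a : ℝ} (ha : 0 < a) :
    Integrable fun x : ℝ => exp (-x ^ 2 / a) := by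
  simpa only [neg_sq_div_eq_neg_inv_mul_sq] using integrable_exp_neg_mul_sq (inv_pos.2 ha)

theorem integral_exp_neg_sq_div (a : ℝ) : ∫ x : ℝ, exp (-x ^ 2 / a) = √(π * a) := by
  simp only [neg_sq_div_eq_neg_inv_mul_sq, integral_gaussian, div_inv_eq_mul]

theorem sq_rpow_neg_one_div_two {a : ℝ} (ha : 0 ≤ a) : (a ^ (-(1 : ℝ) / 2)) ^ 2 = a⁻¹ := by
  rw [← rpow_natCast, ← rpow_mul ha]
  norm_num [rpow_neg_one]

theorem sq_rpow_neg_one_div_four {a : ℝ} (ha : 0 ≤ a) : (a ^ (-(1 : ℝ) / 4)) ^ 2 = (√a)⁻¹ := by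
  rw [← rpow_natCast, ← rpow_mul ha, sqrt_eq_rpow, ← rpow_neg ha]
  norm_num

/-- Comes down to `x ^ 2 ≤ (1/8 + 1/2) (8 (x - s) ^ 2 + 2 s ^ 2)`, Cauchy–Schwarz for
`x = (x - s) + s`. -/
theorem heatKernel_exponent_le {t : ℝ} (ht : 1 ≤ t) (x s : ℝ) :
    -(x - s) ^ 2 / (2 * t) - s ^ 2 / 4 ≤ -x ^ 2 / (16 * t) - s ^ 2 / 8 := by
  have ht0 : 0 < t := by linarith
  have hnum : 0 ≤ 8 * (x - s) ^ 2 + 2 * t * s ^ 2 - x ^ 2 := by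
    nlinarith [sq_nonneg (7 * x - 8 * s), mul_nonneg (sub_nonneg.2 ht) (sq_nonneg s)]
  have hdiff : (-x ^ 2 / (16 * t) - s ^ 2 / 8) - (-(x - s) ^ 2 / (2 * t) - s ^ 2 / 4)
      = (8 * (x - s) ^ 2 + 2 * t * s ^ 2 - x ^ 2) / (16 * t) := by
    field_simp
    ring
  linarith [div_nonneg hnum (by positivity : (0 : ℝ) ≤ 16 * t)]

theorem heatSemigroup1d_sq_le {t : ℝ} (ht : 1 ≤ t) {φ : ℝ → ℝ} (hφ : Measurable φ)
    (hφK : Integrable fun s => φ s ^ 2 * exp (s ^ 2 / 4)) (x : ℝ) :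
    heatSemigroup1d t φ x ^ 2 ≤
      (4 * π * t)⁻¹ * √(8 * π) * exp (-x ^ 2 / (16 * t)) * ∫ s, φ s ^ 2 * exp (s ^ 2 / 4) := by
  have ht0 : 0 < t := by linarith
  set c := (4 * π * t) ^ (-(1 : ℝ) / 2)
  set f : ℝ → ℝ := fun s => c * exp (-(x - s) ^ 2 / (4 * t)) * exp (-s ^ 2 / 8)
  set g : ℝ → ℝ := fun s => φ s * exp (s ^ 2 / 8)
  set B : ℝ → ℝ := fun s => (4 * π * t)⁻¹ * exp (-x ^ 2 / (16 * t)) * exp (-s ^ 2 / 8)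
  have heat_eq : heatSemigroup1d t φ x = ∫ s, f s * g s := by
    refine integral_congr_ae (Filter.Eventually.of_forall fun s => ?_)
    have cancel : exp (-s ^ 2 / 8) * exp (s ^ 2 / 8) = 1 := by rw [← exp_add]; simp [neg_div]
    simp only [f, g]
    linear_combination -(c * exp (-(x - s) ^ 2 / (4 * t)) * φ s) * cancel
  have c_sq : c ^ 2 = (4 * π * t)⁻¹ := sq_rpow_neg_one_div_two (by positivity)
  have f_sq_le : ∀ s, f s ^ 2 ≤ B s := fun s => by
    calc f s ^ 2 = (4 * π * t)⁻¹ * exp (-(x - s) ^ 2 / (2 * t) - s ^ 2 / 4) := by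
          simp only [f, mul_pow, c_sq, ← exp_nat_mul, mul_assoc, ← exp_add]
          ring_nf
      _ ≤ (4 * π * t)⁻¹ * exp (-x ^ 2 / (16 * t) - s ^ 2 / 8) := by
          exact mul_le_mul_of_nonneg_left (exp_le_exp.2 (heatKernel_exponent_le ht x s))
            (by positivity)
      _ = B s := by simp only [B, sub_eq_add_neg, exp_add, neg_div]; ring
  have g_sq : (fun s => g s ^ 2) = fun s => φ s ^ 2 * exp (s ^ 2 / 4) := by
    ext s
    simp only [g, mul_pow, ← exp_nat_mul]
    ring_nf
  have B_int : Integrable B := (integrable_exp_neg_sq_div (by norm_num)).const_mul _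
  have integral_B : ∫ s, B s = (4 * π * t)⁻¹ * exp (-x ^ 2 / (16 * t)) * √(8 * π) := by
    simp only [B, integral_const_mul, integral_exp_neg_sq_div, mul_comm π]
  have hf : MemLp f 2 := by
    refine (memLp_two_iff_integrable_sq (by fun_prop)).2 (B_int.mono' (by fun_prop) ?_)
    exact Filter.Eventually.of_forall fun s => by
      rw [norm_of_nonneg (sq_nonneg _)]; exact f_sq_le s
  have hg : MemLp g 2 :=
    (memLp_two_iff_integrable_sq (by fun_prop)).2 (g_sq ▸ hφK)
  calc heatSemigroup1d t φ x ^ 2 ≤ (∫ s, f s ^ 2) * ∫ s, g s ^ 2 := heat_eq ▸ sq_integral_mul_le hf hg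
    _ ≤ (∫ s, B s) * ∫ s, g s ^ 2 :=
        mul_le_mul_of_nonneg_right (integral_mono hf.integrable_sq B_int f_sq_le)
          (integral_nonneg fun s => sq_nonneg _)
    _ = _ := by rw [integral_B, g_sq]; ring

theorem aestronglyMeasurable_heatSemigroup1d (t : ℝ) {φ : ℝ → ℝ} (hφ : Measurable φ) :
    AEStronglyMeasurable (heatSemigroup1d t φ) := by
  have h : Measurable fun p : ℝ × ℝ =>
      (4 * π * t) ^ (-(1 : ℝ) / 2) * exp (-(p.1 - p.2) ^ 2 / (4 * t)) * φ p.2 := by fun_prop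
  exact h.stronglyMeasurable.integral_prod_right'.aestronglyMeasurable

theorem integrable_heatSemigroup1d_sq {t : ℝ} (ht : 1 ≤ t) {φ : ℝ → ℝ} (hφ : Measurable φ)
    (hφK : Integrable fun s => φ s ^ 2 * exp (s ^ 2 / 4)) :
    Integrable fun x => heatSemigroup1d t φ x ^ 2 := by
  refine ((integrable_exp_neg_sq_div (by positivity : (0 : ℝ) < 16 * t)).const_mul
    ((4 * π * t)⁻¹ * √(8 * π) * ∫ s, φ s ^ 2 * exp (s ^ 2 / 4))).mono'
    ((aestronglyMeasurable_heatSemigroup1d t hφ).pow 2) (Filter.Eventually.of_forall fun x => ?_)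
  rw [norm_of_nonneg (sq_nonneg _)]
  linarith [heatSemigroup1d_sq_le ht hφ hφK x]

theorem integral_heatSemigroup1d_sq_le {t : ℝ} (ht : 1 ≤ t) {φ : ℝ → ℝ} (hφ : Measurable φ)
    (hφK : Integrable fun s => φ s ^ 2 * exp (s ^ 2 / 4)) :
    ∫ x, heatSemigroup1d t φ x ^ 2 ≤ √8 / √t * ∫ s, φ s ^ 2 * exp (s ^ 2 / 4) := by
  have ht0 : 0 < t := by linarith
  set M := ∫ s, φ s ^ 2 * exp (s ^ 2 / 4)
  have constant_eq : (4 * π * t)⁻¹ * √(8 * π) * √(π * (16 * t)) = √8 / √t := by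
    rw [sqrt_mul' _ pi_pos.le, sqrt_mul pi_pos.le, sqrt_mul (by norm_num : (0 : ℝ) ≤ 16),
      show √16 = 4 by rw [show (16 : ℝ) = 4 ^ 2 by norm_num, sqrt_sq (by norm_num)]]
    field_simp
    rw [sq_sqrt pi_pos.le, sq_sqrt ht0.le]
  calc ∫ x, heatSemigroup1d t φ x ^ 2
      ≤ ∫ x, (4 * π * t)⁻¹ * √(8 * π) * M * exp (-x ^ 2 / (16 * t)) :=
        integral_mono (integrable_heatSemigroup1d_sq ht hφ hφK)
          ((integrable_exp_neg_sq_div (by positivity)).const_mul _)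
          fun x => by linarith [heatSemigroup1d_sq_le ht hφ hφK x]
    _ = √8 / √t * M := by
        rw [integral_const_mul, integral_exp_neg_sq_div, ← constant_eq]
        ring

section IndicatorIcc

open Set

theorem indicator_Icc_sq_mul_exp :
    (fun x : ℝ => (Icc 0 1).indicator 1 x ^ 2 * exp (x ^ 2 / 4)) =
      (Icc 0 1).indicator fun x => exp (x ^ 2 / 4) := by
  ext x
  by_cases hx : x ∈ Icc (0 : ℝ) 1 <;> simp [hx]

theorem integrable_indicator_Icc_sq_mul_exp :
    Integrable fun x : ℝ => (Icc 0 1).indicator 1 x ^ 2 * exp (x ^ 2 / 4) := by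
  rw [indicator_Icc_sq_mul_exp]
  exact (Continuous.integrableOn_Icc (by fun_prop)).integrable_indicator measurableSet_Icc

theorem integral_indicator_Icc_sq_mul_exp_pos :
    0 < ∫ x : ℝ, (Icc 0 1).indicator 1 x ^ 2 * exp (x ^ 2 / 4) := by
  rw [indicator_Icc_sq_mul_exp, integral_indicator measurableSet_Icc]
  have := setIntegral_ge_of_const_le_real (μ := volume) (c := 1) measurableSet_Icc
    measure_Icc_lt_top.ne (fun (x : ℝ) _ => one_le_exp (by positivity : 0 ≤ x ^ 2 / 4))
    (Continuous.integrableOn_Icc (a := 0) (b := 1) (by fun_prop))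
  rw [Real.volume_real_Icc_of_le zero_le_one] at this
  linarith

theorem integral_indicator_Icc_sq_mul_exp_le :
    ∫ x : ℝ, (Icc 0 1).indicator 1 x ^ 2 * exp (x ^ 2 / 4) ≤ exp (1 / 4) := by
  rw [indicator_Icc_sq_mul_exp, integral_indicator measurableSet_Icc]
  have := norm_setIntegral_le_of_norm_le_const (μ := volume) (s := Icc (0 : ℝ) 1)
    (C := exp (1 / 4)) measure_Icc_lt_top (f := fun x : ℝ => exp (x ^ 2 / 4)) fun x hx => by
      rw [norm_of_nonneg (exp_pos _).le]
      exact exp_le_exp.2 (by nlinarith [hx.1, hx.2])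
  rw [Real.volume_real_Icc_of_le zero_le_one, norm_eq_abs, sub_zero, mul_one] at this
  exact (le_abs_self _).trans this

theorem heatSemigroup1d_indicator_eq (t x : ℝ) :
    heatSemigroup1d t ((Icc 0 1).indicator 1) x =
      ∫ s in Icc 0 1, (4 * π * t) ^ (-(1 : ℝ) / 2) * exp (-(x - s) ^ 2 / (4 * t)) := by
  rw [← integral_indicator measurableSet_Icc]
  exact integral_congr_ae (Filter.Eventually.of_forall fun s => by
    by_cases hs : s ∈ Icc (0 : ℝ) 1 <;> simp [hs])

theorem heatSemigroup1d_indicator_ge {t : ℝ} (ht : 1 ≤ t) {x : ℝ} (hx : x ∈ Icc 0 √t) :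
    (4 * π * t) ^ (-(1 : ℝ) / 2) * exp (-1 / 4) ≤ heatSemigroup1d t ((Icc 0 1).indicator 1) x := by
  have ht0 : 0 < t := by linarith
  have one_le_sqrt_t : 1 ≤ √t := one_le_sqrt.2 ht
  have kernel_ge : ∀ s ∈ Icc (0 : ℝ) 1, (4 * π * t) ^ (-(1 : ℝ) / 2) * exp (-1 / 4) ≤
      (4 * π * t) ^ (-(1 : ℝ) / 2) * exp (-(x - s) ^ 2 / (4 * t)) := fun s hs => by
    have dist_sq_le : (x - s) ^ 2 ≤ t := by
      rw [← sq_sqrt ht0.le]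
      exact sq_le_sq' (by linarith [hx.1, hs.2]) (by linarith [hx.2, hs.1])
    refine mul_le_mul_of_nonneg_left (exp_le_exp.2 ?_) (by positivity)
    rw [le_div_iff₀ (by positivity)]
    linarith
  have := setIntegral_ge_of_const_le_real (μ := volume) measurableSet_Icc measure_Icc_lt_top.ne
    kernel_ge (Continuous.integrableOn_Icc (by fun_prop))
  rwa [Real.volume_real_Icc_of_le zero_le_one, sub_zero, mul_one,
    ← heatSemigroup1d_indicator_eq] at this

theorem integral_heatSemigroup1d_indicator_sq_ge {t : ℝ} (ht : 1 ≤ t) :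
    exp (-1 / 2) / (4 * π * √t) ≤ ∫ x, heatSemigroup1d t ((Icc 0 1).indicator 1) x ^ 2 := by
  have ht0 : 0 < t := by linarith
  have lower_sq : ∀ x ∈ Icc 0 √t, exp (-1 / 2) / (4 * π * t) ≤
      heatSemigroup1d t ((Icc 0 1).indicator 1) x ^ 2 := fun x hx => by
    have := pow_le_pow_left₀ (by positivity) (heatSemigroup1d_indicator_ge ht hx) 2
    rwa [mul_pow, sq_rpow_neg_one_div_two (by positivity), ← exp_nat_mul, ← div_eq_inv_mul,
      show ((2 : ℕ) : ℝ) * (-1 / 4) = -1 / 2 by norm_num] at this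
  have integrable_sq := integrable_heatSemigroup1d_sq ht
    (measurable_one.indicator measurableSet_Icc) integrable_indicator_Icc_sq_mul_exp
  calc exp (-1 / 2) / (4 * π * √t) = exp (-1 / 2) / (4 * π * t) * volume.real (Icc 0 √t) := by
        rw [Real.volume_real_Icc_of_le (sqrt_nonneg t), sub_zero]
        field_simp
        exact (sq_sqrt ht0.le).symm
    _ ≤ ∫ x in Icc 0 √t, heatSemigroup1d t ((Icc 0 1).indicator 1) x ^ 2 :=
        setIntegral_ge_of_const_le_real measurableSet_Icc measure_Icc_lt_top.ne lower_sq
          integrable_sq.integrableOn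
    _ ≤ ∫ x, heatSemigroup1d t ((Icc 0 1).indicator 1) x ^ 2 :=
        setIntegral_le_integral integrable_sq (Filter.Eventually.of_forall fun x => sq_nonneg _)

end IndicatorIcc

theorem four_mul_pi_mul_exp_three_quarters_lt : 4 * π * exp (3 / 4) < 64 := by
  have exp_lt : exp (3 / 4) < 3 :=
    (exp_lt_exp.2 (by norm_num : (3 / 4 : ℝ) < 1)).trans (exp_one_lt_d9.trans (by norm_num))
  nlinarith [pi_lt_four, exp_pos (3 / 4), pi_pos]

/-- There is a constant `C` such that for all `t ≥ 1` the operator norm of `e^{tΔ}` from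
`L²(ℝ, e^{x²/4}dx)` to `L²(ℝ)` satisfies `C⁻¹ t^{-1/4} ≤ ‖e^{tΔ}‖ ≤ C t^{-1/4}`. -/
theorem heat_semigroup_weighted_decay :
    ∃ C > (0 : ℝ), ∀ t : ℝ, 1 ≤ t →
      (∀ φ : ℝ → ℝ, Measurable φ →
        Integrable (fun x : ℝ => (φ x) ^ 2 * Real.exp (x ^ 2 / 4)) →
        ∫ x : ℝ, (heatSemigroup1d t φ x) ^ 2
          ≤ (C * t ^ (-(1 : ℝ) / 4)) ^ 2 * ∫ x : ℝ, (φ x) ^ 2 * Real.exp (x ^ 2 / 4)) ∧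
      (∃ φ : ℝ → ℝ, Measurable φ ∧
        Integrable (fun x : ℝ => (φ x) ^ 2 * Real.exp (x ^ 2 / 4)) ∧
        0 < ∫ x : ℝ, (φ x) ^ 2 * Real.exp (x ^ 2 / 4) ∧
        (C⁻¹ * t ^ (-(1 : ℝ) / 4)) ^ 2 * (∫ x : ℝ, (φ x) ^ 2 * Real.exp (x ^ 2 / 4))
          ≤ ∫ x : ℝ, (heatSemigroup1d t φ x) ^ 2) := by
  refine ⟨8, by norm_num, fun t ht => ⟨fun φ hφ hφK => ?_, ?_⟩⟩
  all_goals simp only [mul_pow, sq_rpow_neg_one_div_four (zero_le_one.trans ht)]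
  · refine (integral_heatSemigroup1d_sq_le ht hφ hφK).trans
      (mul_le_mul_of_nonneg_right ?_ (integral_nonneg fun s => by positivity))
    rw [div_eq_mul_inv]
    gcongr
    rw [sqrt_le_left (by norm_num)]
    norm_num
  · refine ⟨_, measurable_one.indicator measurableSet_Icc, integrable_indicator_Icc_sq_mul_exp,
      integral_indicator_Icc_sq_mul_exp_pos, le_trans ?_ (integral_heatSemigroup1d_indicator_sq_ge ht)⟩
    have exp_split : exp (1 / 4) = exp (3 / 4) * exp (-1 / 2) := by rw [← exp_add]; norm_num
    calc (8 : ℝ)⁻¹ ^ 2 * (√t)⁻¹ * ∫ x, (Set.Icc 0 1).indicator 1 x ^ 2 * exp (x ^ 2 / 4)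
        ≤ 8⁻¹ ^ 2 * (√t)⁻¹ * exp (1 / 4) := by gcongr; exact integral_indicator_Icc_sq_mul_exp_le
      _ ≤ exp (-1 / 2) / (4 * π * √t) := by
        rw [exp_split, le_div_iff₀ (by positivity)]
        field_simp
        nlinarith [four_mul_pi_mul_exp_three_quarters_lt, exp_pos (-1 / 2)]
end
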